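/- arXiv:1011.4043 — 2 statements merged into one kernel-verified Lean document; each statement's English description precedes it below -/
import Mathlib

section
/- For every b with 1 < b ≤ 2, there exist real r, s with either r > 0, or (r = 0 and s > 0), such that if W has density proportional to exp(−r x² − s x) on (0,∞), then E[W] = 1 and E[W²] = b. -/
open MeasureTheory Real

open Set Filter ENNReal

noncomputable def Mk (k : ℕ) (s : ℝ) : ℝ :=
  ∫ x in Set.Ioi (0:ℝ), x ^ k * Real.exp (-x ^ 2 - s * x)

lemma integrableOn_Mk (k : ℕ) (s : ℝ) :
    IntegrableOn (fun x : ℝ => x ^ k * Real.exp (-x ^ 2 - s * x)) (Set.Ioi 0) := by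
  have hk : (-1:ℝ) < (k:ℝ) := by exact_mod_cast lt_of_lt_of_le neg_one_lt_zero (by exact_mod_cast Nat.cast_nonneg k)
  have hbd : IntegrableOn
      (fun x : ℝ => Real.exp (s ^ 2 / 2) * (x ^ (k:ℝ) * Real.exp (-(1/2) * x ^ 2)))
      (Set.Ioi 0) :=
    (integrableOn_rpow_mul_exp_neg_mul_sq (by norm_num) hk).const_mul _
  refine Integrable.mono' hbd ?_ ?_
  · exact (Continuous.mul (by continuity) (by continuity)).aestronglyMeasurable
  · filter_upwards [ae_restrict_mem measurableSet_Ioi] with x hx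
    have hx0 : (0:ℝ) < x := hx
    rw [Real.norm_eq_abs, abs_mul, abs_of_nonneg (by positivity : (0:ℝ) ≤ x ^ k),
      abs_of_nonneg (Real.exp_pos _).le, ← Real.rpow_natCast x k]
    have h1 : Real.exp (-x ^ 2 - s * x) ≤ Real.exp (s ^ 2 / 2) * Real.exp (-(1/2) * x ^ 2) := by
      rw [← Real.exp_add]
      apply Real.exp_le_exp.mpr
      nlinarith [sq_nonneg (x + s)]
    calc x ^ (k:ℝ) * Real.exp (-x ^ 2 - s * x)
        ≤ x ^ (k:ℝ) * (Real.exp (s ^ 2 / 2) * Real.exp (-(1/2) * x ^ 2)) := by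
          exact mul_le_mul_of_nonneg_left h1 (by positivity)
      _ = Real.exp (s ^ 2 / 2) * (x ^ (k:ℝ) * Real.exp (-(1/2) * x ^ 2)) := by ring

lemma Mk_pos (k : ℕ) (s : ℝ) : 0 < Mk k s := by
  rw [Mk]
  have hnn : 0 ≤ᶠ[ae (volume.restrict (Set.Ioi (0:ℝ)))] fun x : ℝ => x ^ k * Real.exp (-x ^ 2 - s * x) := by
    filter_upwards [ae_restrict_mem measurableSet_Ioi] with x hx
    have hx0 : (0:ℝ) < x := hx
    positivity
  rw [setIntegral_pos_iff_support_of_nonneg_ae hnn (integrableOn_Mk k s)]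
  have : Set.Ioi (0:ℝ) ⊆ Function.support (fun x : ℝ => x ^ k * Real.exp (-x ^ 2 - s * x)) ∩ Set.Ioi 0 := by
      intro x hx
      have hx0 : (0:ℝ) < x := hx
      refine ⟨?_, hx⟩
      simp only [Function.mem_support]
      positivity
  calc (0:ℝ≥0∞) < volume (Set.Ioi (0:ℝ)) := by simp
    _ ≤ _ := measure_mono this

lemma continuous_Mk (k : ℕ) : Continuous (Mk k) := by
  rw [continuous_iff_continuousAt]
  intro s0
  have hev : ∀ᶠ s in nhds s0, |s - s0| < 1 := by
    have := Metric.ball_mem_nhds s0 one_pos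
    filter_upwards [this] with s hs
    simpa [Real.dist_eq] using hs
  apply continuousAt_of_dominated
    (bound := fun x => x ^ k * Real.exp (-x ^ 2 - (-(|s0| + 1)) * x))
  · exact Eventually.of_forall fun s =>
      (Continuous.mul (by continuity) (by continuity)).aestronglyMeasurable
  · filter_upwards [hev] with s hs
    filter_upwards [ae_restrict_mem measurableSet_Ioi] with x hx
    have hx0 : (0:ℝ) < x := hx
    rw [Real.norm_eq_abs, abs_mul, abs_of_nonneg (by positivity : (0:ℝ) ≤ x ^ k),
      abs_of_nonneg (Real.exp_pos _).le]
    have habs : |s| < |s0| + 1 := by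
      calc |s| ≤ |s0| + |s - s0| := by
            have := abs_sub_abs_le_abs_sub s s0; linarith
        _ < |s0| + 1 := by linarith
    refine mul_le_mul_of_nonneg_left (Real.exp_le_exp.mpr ?_) (by positivity)
    have : -(s * x) ≤ |s| * x := by
      calc -(s * x) = (-s) * x := by ring
        _ ≤ |s| * x := mul_le_mul_of_nonneg_right (neg_le_abs s) hx0.le
    nlinarith [habs, hx0]
  · exact integrableOn_Mk k _
  · filter_upwards [ae_restrict_mem measurableSet_Ioi] with x _
    exact (Continuous.mul continuous_const (by continuity)).continuousAt

lemma integrableOn_pow_exp_neg (k : ℕ) :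
    IntegrableOn (fun x : ℝ => x ^ k * Real.exp (-x)) (Set.Ioi 0) := by
  have h := Real.GammaIntegral_convergent (s := (k:ℝ) + 1) (by positivity)
  refine h.congr_fun (fun x hx => ?_) measurableSet_Ioi
  have hx0 : (0:ℝ) < x := hx
  rw [add_sub_cancel_right]; beta_reduce; rw [Real.rpow_natCast, mul_comm]

lemma integral_pow_exp_neg (k : ℕ) :
    ∫ x in Set.Ioi (0:ℝ), x ^ k * Real.exp (-x) = ((Nat.factorial k : ℕ) : ℝ) := by
  have h := Real.Gamma_eq_integral (s := (k:ℝ) + 1) (by positivity)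
  rw [Real.Gamma_nat_eq_factorial] at h
  rw [h]
  refine setIntegral_congr_fun measurableSet_Ioi (fun x hx => ?_)
  rw [add_sub_cancel_right, Real.rpow_natCast, mul_comm]

lemma Mk_rep_atTop (k : ℕ) {s : ℝ} (hs : 0 < s) :
    s ^ (k+1) * Mk k s = ∫ y in Set.Ioi (0:ℝ), y ^ k * Real.exp (-(s⁻¹ ^ 2) * y ^ 2 - y) := by
  have h := integral_comp_mul_left_Ioi
    (fun y => y ^ k * Real.exp (-(s⁻¹ ^ 2) * y ^ 2 - y)) 0 hs
  rw [mul_zero] at h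
  have heq : ∀ x : ℝ, (s * x) ^ k * Real.exp (-(s⁻¹ ^ 2) * (s * x) ^ 2 - s * x)
      = s ^ k * (x ^ k * Real.exp (-x ^ 2 - s * x)) := by
    intro x
    have : -(s⁻¹ ^ 2) * (s * x) ^ 2 - s * x = -x ^ 2 - s * x := by
      field_simp
    rw [this, mul_pow]; ring
  simp only [heq] at h
  rw [integral_const_mul] at h
  rw [smul_eq_mul] at h
  rw [← Mk] at h
  have hsne : s ≠ 0 := hs.ne'
  field_simp at h ⊢
  rw [pow_succ]
  nlinarith [h]

lemma tendsto_smul_Mk_atTop (k : ℕ) :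
    Tendsto (fun s : ℝ => s ^ (k+1) * Mk k s) atTop (nhds ((Nat.factorial k : ℕ) : ℝ)) := by
  have key : Tendsto (fun s : ℝ => ∫ y in Set.Ioi (0:ℝ),
      y ^ k * Real.exp (-(s⁻¹ ^ 2) * y ^ 2 - y)) atTop (nhds ((Nat.factorial k : ℕ) : ℝ)) := by
    rw [← integral_pow_exp_neg k]
    apply tendsto_integral_filter_of_dominated_convergence
      (bound := fun y => y ^ k * Real.exp (-y))
    · exact Eventually.of_forall fun s =>
        (Continuous.mul (by continuity) (by continuity)).aestronglyMeasurable
    · refine Eventually.of_forall fun s => ?_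
      filter_upwards [ae_restrict_mem measurableSet_Ioi] with y hy
      have hy0 : (0:ℝ) < y := hy
      rw [Real.norm_eq_abs, abs_mul, abs_of_nonneg (by positivity : (0:ℝ) ≤ y ^ k),
        abs_of_nonneg (Real.exp_pos _).le]
      refine mul_le_mul_of_nonneg_left (Real.exp_le_exp.mpr ?_) (by positivity)
      nlinarith [sq_nonneg (s⁻¹ * y), sq_nonneg s⁻¹, sq_nonneg y]
    · exact integrableOn_pow_exp_neg k
    · filter_upwards [ae_restrict_mem measurableSet_Ioi] with y hy
      have h1 : Tendsto (fun s : ℝ => -(s⁻¹ ^ 2) * y ^ 2 - y) atTop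
          (nhds (-(0 ^ 2) * y ^ 2 - y)) := by
        exact (((tendsto_inv_atTop_zero.pow 2).neg.mul tendsto_const_nhds).sub
          tendsto_const_nhds)
      have h2 := ((Real.continuous_exp.tendsto _).comp h1).const_mul (y ^ k)
      simpa using h2
  apply key.congr'
  filter_upwards [eventually_gt_atTop (0:ℝ)] with s hs
  exact (Mk_rep_atTop k hs).symm

noncomputable def Bf (s : ℝ) : ℝ := Mk 2 s * Mk 0 s / (Mk 1 s) ^ 2

lemma tendsto_Bf_atTop : Tendsto Bf atTop (nhds 2) := by
  have h2 := tendsto_smul_Mk_atTop 2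
  have h0 := tendsto_smul_Mk_atTop 0
  have h1 := tendsto_smul_Mk_atTop 1
  have key : Tendsto (fun s : ℝ =>
      (s ^ 3 * Mk 2 s) * (s ^ 1 * Mk 0 s) / (s ^ 2 * Mk 1 s) ^ 2) atTop (nhds 2) := by
    have := ((h2.mul h0).div (h1.pow 2) (by norm_num [Nat.factorial]))
    norm_num [Nat.factorial] at this
    exact this.congr (fun s => by simp [Pi.div_apply])
  apply key.congr'
  filter_upwards [eventually_gt_atTop (0:ℝ)] with s hs
  have hm := Mk_pos 1 s
  rw [Bf, div_eq_div_iff (by positivity) (by positivity)]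
  ring

noncomputable def Kk (k : ℕ) (u : ℝ) : ℝ :=
  ∫ z in Set.Ioi (-(u/2)), ((2/u) * z + 1) ^ k * Real.exp (-z ^ 2)

lemma integral_Ioi_add (f : ℝ → ℝ) (a c : ℝ) :
    ∫ x in Set.Ioi a, f (x + c) = ∫ x in Set.Ioi (a + c), f x := by
  have h := (measurePreserving_add_right (volume : Measure ℝ) c).setIntegral_preimage_emb
    (measurableEmbedding_addRight c) f (Set.Ioi (a + c))
  rw [preimage_add_const_Ioi] at h
  simpa using h

lemma Mk_rep_atBot (k : ℕ) {u : ℝ} (hu : 0 < u) :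
    Mk k (-u) = Real.exp (u ^ 2 / 4) * ((u/2) ^ k * Kk k u) := by
  have h := integral_Ioi_add (fun x => x ^ k * Real.exp (-x ^ 2 - (-u) * x)) (-(u/2)) (u/2)
  rw [neg_add_cancel] at h
  rw [Mk, ← h]
  rw [Kk, ← integral_const_mul, ← integral_const_mul]
  refine setIntegral_congr_fun measurableSet_Ioi (fun z _ => ?_)
  have hne : u ≠ 0 := hu.ne'
  have h1 : (z + u/2) ^ k = (u/2) ^ k * ((2/u) * z + 1) ^ k := by
    rw [← mul_pow]
    congr 1
    field_simp
  have h2 : -(z + u/2) ^ 2 - (-u) * (z + u/2) = u ^ 2 / 4 + (-z ^ 2) := by ring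
  rw [h1, h2, Real.exp_add]
  ring

lemma tendsto_Kk (k : ℕ) (hk : k ≤ 2) :
    Tendsto (Kk k) atTop (nhds (Real.sqrt π)) := by
  have hlim : (Real.sqrt π) = ∫ z : ℝ, Real.exp (-1 * z ^ 2) := by
    rw [integral_gaussian]
    norm_num
  rw [hlim]
  have hrep : ∀ u : ℝ, Kk k u = ∫ z : ℝ,
      (Set.Ioi (-(u/2))).indicator (fun z => ((2/u) * z + 1) ^ k * Real.exp (-z ^ 2)) z := by
    intro u
    rw [integral_indicator measurableSet_Ioi, Kk]
  rw [funext hrep]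
  apply tendsto_integral_filter_of_dominated_convergence
    (bound := fun z => 6 * Real.exp (-(1/2) * z ^ 2))
  · refine Eventually.of_forall fun u => ?_
    exact (Measurable.indicator (by fun_prop) measurableSet_Ioi).aestronglyMeasurable
  · filter_upwards [eventually_ge_atTop (2:ℝ)] with u hu
    refine Eventually.of_forall fun z => ?_
    by_cases hz : z ∈ Set.Ioi (-(u/2))
    · rw [Set.indicator_of_mem hz]
      have hz' : -(u/2) < z := hz
      have hb1 : |(2/u) * z + 1| ≤ 1 + |z| := by
        have h2u : (2:ℝ)/u ≤ 1 := by
          rw [div_le_one (by linarith)]; linarith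
        have : |(2/u) * z| ≤ |z| := by
          rw [abs_mul]
          have : |(2:ℝ)/u| ≤ 1 := by
            rw [abs_of_nonneg (by positivity)]; exact h2u
          nlinarith [abs_nonneg z]
        calc |(2/u) * z + 1| ≤ |(2/u) * z| + |1| := abs_add_le _ _
          _ ≤ 1 + |z| := by rw [abs_one]; linarith
      rw [Real.norm_eq_abs, abs_mul, abs_of_nonneg (Real.exp_pos _).le, abs_pow]
      have hb2 : |(2/u) * z + 1| ^ k ≤ (1 + |z|) ^ 2 := by
        calc |(2/u) * z + 1| ^ k ≤ (1 + |z|) ^ k :=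
              pow_le_pow_left₀ (abs_nonneg _) hb1 k
          _ ≤ (1 + |z|) ^ 2 := by
              apply pow_le_pow_right₀ (by linarith [abs_nonneg z]) hk
      have hb3 : (1 + |z|) ^ 2 ≤ 6 * Real.exp (z ^ 2 / 2) := by
        have he := Real.add_one_le_exp (z ^ 2 / 2)
        have hz2 : |z| ^ 2 = z ^ 2 := sq_abs z
        nlinarith [abs_nonneg z, Real.exp_pos (z ^ 2 / 2)]
      calc |(2/u) * z + 1| ^ k * Real.exp (-z ^ 2)
          ≤ (1 + |z|) ^ 2 * Real.exp (-z ^ 2) :=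
            mul_le_mul_of_nonneg_right hb2 (Real.exp_pos _).le
        _ ≤ 6 * Real.exp (z ^ 2 / 2) * Real.exp (-z ^ 2) :=
            mul_le_mul_of_nonneg_right hb3 (Real.exp_pos _).le
        _ = 6 * Real.exp (-(1/2) * z ^ 2) := by
            rw [mul_assoc, ← Real.exp_add]
            ring_nf
    · rw [Set.indicator_of_notMem hz]
      simp only [norm_zero]
      positivity
  · exact (integrable_exp_neg_mul_sq (by norm_num : (0:ℝ) < 1/2)).const_mul 6
  · refine Eventually.of_forall fun z => ?_
    have hev : ∀ᶠ u : ℝ in atTop, z ∈ Set.Ioi (-(u/2)) := by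
      filter_upwards [eventually_gt_atTop (-(2*z))] with u hu
      simp only [Set.mem_Ioi]
      linarith
    have h1 : Tendsto (fun u : ℝ => ((2/u) * z + 1) ^ k * Real.exp (-z ^ 2)) atTop
        (nhds (Real.exp (-1 * z ^ 2))) := by
      have ht : Tendsto (fun u : ℝ => (2/u) * z + 1) atTop (nhds 1) := by
        have : Tendsto (fun u : ℝ => (2:ℝ)/u) atTop (nhds 0) :=
          tendsto_const_nhds.div_atTop tendsto_id
        have := (this.mul_const z).add_const 1
        simpa using this
      have := (ht.pow k).mul_const (Real.exp (-z ^ 2))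
      simpa using this
    apply h1.congr'
    filter_upwards [hev] with u hu
    rw [Set.indicator_of_mem hu]

lemma Kk_one_pos {u : ℝ} (hu : 0 < u) : 0 < Kk 1 u := by
  have h := Mk_pos 1 (-u)
  rw [Mk_rep_atBot 1 hu] at h
  by_contra h'
  push_neg at h'
  have hE := Real.exp_pos (u ^ 2 / 4)
  rw [pow_one] at h
  nlinarith [mul_nonpos_of_nonneg_of_nonpos (by positivity : (0:ℝ) ≤ u/2) h']

lemma Bf_neg_rep {u : ℝ} (hu : 0 < u) :
    Bf (-u) = Kk 2 u * Kk 0 u / (Kk 1 u) ^ 2 := by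
  rw [Bf, Mk_rep_atBot 2 hu, Mk_rep_atBot 0 hu, Mk_rep_atBot 1 hu]
  have hE : Real.exp (u ^ 2 / 4) ≠ 0 := (Real.exp_pos _).ne'
  have hc : u / 2 ≠ 0 := by positivity
  have hK1 : Kk 1 u ≠ 0 := (Kk_one_pos hu).ne'
  field_simp

lemma tendsto_Bf_atBot : Tendsto Bf atBot (nhds 1) := by
  have hπ : (0:ℝ) < Real.sqrt π := Real.sqrt_pos.mpr Real.pi_pos
  have key : Tendsto (fun u : ℝ => Kk 2 u * Kk 0 u / (Kk 1 u) ^ 2) atTop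
      (nhds (Real.sqrt π * Real.sqrt π / (Real.sqrt π) ^ 2)) :=
    ((tendsto_Kk 2 le_rfl).mul (tendsto_Kk 0 (by norm_num))).div
      ((tendsto_Kk 1 (by norm_num)).pow 2) (by positivity)
  have hval : Real.sqrt π * Real.sqrt π / (Real.sqrt π) ^ 2 = 1 := by
    rw [sq]
    exact div_self (by positivity)
  rw [hval] at key
  have key2 : Tendsto (fun u : ℝ => Bf (-u)) atTop (nhds 1) := by
    apply key.congr'
    filter_upwards [eventually_gt_atTop (0:ℝ)] with u hu
    exact (Bf_neg_rep hu).symm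
  have := key2.comp tendsto_neg_atBot_atTop
  refine this.congr fun s => ?_
  simp [Function.comp]

lemma Mk_scale (k : ℕ) (s0 : ℝ) {ν : ℝ} (hν : 0 < ν) :
    ∫ x in Set.Ioi (0:ℝ), x ^ k * Real.exp (-ν ^ 2 * x ^ 2 - s0 * ν * x)
      = ν⁻¹ ^ (k+1) * Mk k s0 := by
  have h := integral_comp_mul_left_Ioi (fun y => y ^ k * Real.exp (-y ^ 2 - s0 * y)) 0 hν
  rw [mul_zero] at h
  have heq : ∀ x : ℝ, (ν * x) ^ k * Real.exp (-(ν * x) ^ 2 - s0 * (ν * x))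
      = ν ^ k * (x ^ k * Real.exp (-ν ^ 2 * x ^ 2 - s0 * ν * x)) := by
    intro x
    rw [mul_pow]
    have : -(ν * x) ^ 2 - s0 * (ν * x) = -ν ^ 2 * x ^ 2 - s0 * ν * x := by ring
    rw [this]; ring
  simp only [heq] at h
  rw [integral_const_mul, smul_eq_mul, ← Mk] at h
  have hν' : ν ≠ 0 := hν.ne'
  calc (∫ x in Set.Ioi (0:ℝ), x ^ k * Real.exp (-ν ^ 2 * x ^ 2 - s0 * ν * x))
      = ν⁻¹ ^ k * (ν ^ k * ∫ x in Set.Ioi (0:ℝ), x ^ k * Real.exp (-ν ^ 2 * x ^ 2 - s0 * ν * x)) := by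
        rw [← mul_assoc, ← mul_pow, inv_mul_cancel₀ hν', one_pow, one_mul]
    _ = ν⁻¹ ^ k * (ν⁻¹ * Mk k s0) := by rw [h]
    _ = ν⁻¹ ^ (k+1) * Mk k s0 := by rw [pow_succ]; ring

lemma continuous_Bf : Continuous Bf :=
  Continuous.div ((continuous_Mk 2).mul (continuous_Mk 0)) ((continuous_Mk 1).pow 2)
    (fun s => by have := Mk_pos 1 s; positivity)

/-- For every `b` with `1 < b ≤ 2` there exist admissible `(r, s)` such that the distribution
with density proportional to `exp(−r x² − s x)` on `(0,∞)` has mean `1` and second moment `b`. -/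
theorem exists_rs_moments {b : ℝ} (hb1 : 1 < b) (hb2 : b ≤ 2) :
    ∃ r s : ℝ, (0 < r ∨ (r = 0 ∧ 0 < s)) ∧
      (∫ x in Set.Ioi (0 : ℝ), x * Real.exp (-r * x ^ 2 - s * x)) /
        (∫ x in Set.Ioi (0 : ℝ), Real.exp (-r * x ^ 2 - s * x)) = 1 ∧
      (∫ x in Set.Ioi (0 : ℝ), x ^ 2 * Real.exp (-r * x ^ 2 - s * x)) /
        (∫ x in Set.Ioi (0 : ℝ), Real.exp (-r * x ^ 2 - s * x)) = b := by
  rcases eq_or_lt_of_le hb2 with hb2' | hb2'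
  · refine ⟨0, 1, Or.inr ⟨rfl, one_pos⟩, ?_, ?_⟩
    · have h1 : (∫ x in Set.Ioi (0 : ℝ), x * Real.exp (-0 * x ^ 2 - 1 * x))
          = ∫ x in Set.Ioi (0 : ℝ), x ^ 1 * Real.exp (-x) := by
        congr 1; funext x; norm_num
      have h0 : (∫ x in Set.Ioi (0 : ℝ), Real.exp (-0 * x ^ 2 - 1 * x))
          = ∫ x in Set.Ioi (0 : ℝ), x ^ 0 * Real.exp (-x) := by
        congr 1; funext x; norm_num
      rw [h1, h0, integral_pow_exp_neg, integral_pow_exp_neg]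
      norm_num [Nat.factorial]
    · have h2 : (∫ x in Set.Ioi (0 : ℝ), x ^ 2 * Real.exp (-0 * x ^ 2 - 1 * x))
          = ∫ x in Set.Ioi (0 : ℝ), x ^ 2 * Real.exp (-x) := by
        congr 1; funext x; norm_num
      have h0 : (∫ x in Set.Ioi (0 : ℝ), Real.exp (-0 * x ^ 2 - 1 * x))
          = ∫ x in Set.Ioi (0 : ℝ), x ^ 0 * Real.exp (-x) := by
        congr 1; funext x; norm_num
      rw [h2, h0, integral_pow_exp_neg, integral_pow_exp_neg, hb2']
      norm_num [Nat.factorial]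
  · obtain ⟨sp, hsp⟩ := (tendsto_Bf_atTop.eventually (eventually_gt_nhds hb2')).exists
    obtain ⟨sm, hsm⟩ := (tendsto_Bf_atBot.eventually (eventually_lt_nhds hb1)).exists
    have hmem : b ∈ Set.uIcc (Bf sm) (Bf sp) := by
      rw [Set.mem_uIcc]; left; exact ⟨hsm.le, hsp.le⟩
    obtain ⟨s0, _, hs0⟩ := intermediate_value_uIcc (continuous_Bf.continuousOn) hmem
    have h0 := Mk_pos 0 s0
    have h1 := Mk_pos 1 s0
    have h2 := Mk_pos 2 s0
    set ν := Mk 1 s0 / Mk 0 s0 with hνdef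
    have hν : 0 < ν := div_pos h1 h0
    refine ⟨ν ^ 2, s0 * ν, Or.inl (by positivity), ?_, ?_⟩
    · have I1 : (∫ x in Set.Ioi (0 : ℝ), x * Real.exp (-ν ^ 2 * x ^ 2 - s0 * ν * x))
          = ν⁻¹ ^ 2 * Mk 1 s0 := by
        rw [← Mk_scale 1 s0 hν]
        congr 1; funext x; rw [pow_one]
      have I0 : (∫ x in Set.Ioi (0 : ℝ), Real.exp (-ν ^ 2 * x ^ 2 - s0 * ν * x))
          = ν⁻¹ ^ 1 * Mk 0 s0 := by
        rw [← Mk_scale 0 s0 hν]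
        congr 1; funext x; rw [pow_zero, one_mul]
      rw [I1, I0, hνdef]
      field_simp
    · have I2 : (∫ x in Set.Ioi (0 : ℝ), x ^ 2 * Real.exp (-ν ^ 2 * x ^ 2 - s0 * ν * x))
          = ν⁻¹ ^ 3 * Mk 2 s0 := Mk_scale 2 s0 hν
      have I0 : (∫ x in Set.Ioi (0 : ℝ), Real.exp (-ν ^ 2 * x ^ 2 - s0 * ν * x))
          = ν⁻¹ ^ 1 * Mk 0 s0 := by
        rw [← Mk_scale 0 s0 hν]
        congr 1; funext x; rw [pow_zero, one_mul]
      rw [I2, I0, ← hs0, Bf, hνdef]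
      field_simp
end

section
/- Fix b > 1, let K^ε = {x ∈ (0,∞)ⁿ : ε < μ(x) − 1 < 2ε, ε < μ₂(x) − b < bε} with 0 < ε < 1/2, and let Y = (Y_1,...,Y_n) have i.i.d. coordinates with density proportional to exp(−r y² − s y) on (0,∞). Then for any measurable f : K^ε → [0,∞), e^{−Bεn} E[f(X^ε)] ≤ E[f(Y) | Y ∈ K^ε] ≤ e^{Bεn} E[f(X^ε)], where B = 2br + 4|s| and X^ε is uniformly distributed (normalized Lebesgue) on K^ε, assuming K^ε has positive finite Lebesgue measure. -/
open MeasureTheory Real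

private lemma exp_bounds_aux {r s b ε nn S Q : ℝ} (hr : 0 ≤ r)
    (hS1 : nn * (1 + ε) < S) (hS2 : S < nn * (1 + 2 * ε))
    (hQ1 : nn * (b + ε) < Q) (hQ2 : Q < nn * (b + b * ε)) :
    -r * (nn * (b + b * ε)) - s * (nn * (1 + ε)) - |s| * (nn * ε) ≤ -r * Q - s * S ∧
      -r * Q - s * S ≤ -r * (nn * (b + ε)) - s * (nn * (1 + ε)) + |s| * (nn * ε) := by
  have habs0 : (0:ℝ) ≤ |s| := abs_nonneg s
  have habs1 : -|s| ≤ s := neg_abs_le s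
  have habs2 : s ≤ |s| := le_abs_self s
  constructor
  · nlinarith [mul_nonneg hr (sub_nonneg.2 hQ2.le),
      mul_nonneg (sub_nonneg.2 habs2) (sub_nonneg.2 hS1.le),
      mul_nonneg habs0 (sub_nonneg.2 hS2.le)]
  · nlinarith [mul_nonneg hr (sub_nonneg.2 hQ1.le),
      mul_nonneg (by linarith : (0:ℝ) ≤ |s| + s) (sub_nonneg.2 hS1.le),
      mul_nonneg habs0 (sub_nonneg.2 hS2.le)]


/-- Comparison between the uniform distribution on the thickened set `K^ε` and the
conditional distribution of an i.i.d. sample with density proportional to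
`exp(−r y² − s y)` given that it lies in `K^ε`:
`e^{−Bεn} E[f(X^ε)] ≤ E[f(Y) | Y ∈ K^ε] ≤ e^{Bεn} E[f(X^ε)]` where `B = 2br + 4|s|`. -/
theorem thick_set_conditional_comparison
    {b : ℝ} (hb : 1 < b) {n : ℕ} (hn : 1 ≤ n)
    {ε : ℝ} (hε : 0 < ε) (hε' : ε < 1 / 2)
    {r s : ℝ} (hrs : 0 < r ∨ (r = 0 ∧ 0 < s))
    (Kε : Set (Fin n → ℝ))
    (hK : Kε = {x : Fin n → ℝ | (∀ i, 0 < x i) ∧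
        ε < (1 / n) * ∑ i, x i - 1 ∧ (1 / n) * ∑ i, x i - 1 < 2 * ε ∧
        ε < (1 / n) * ∑ i, (x i) ^ 2 - b ∧ (1 / n) * ∑ i, (x i) ^ 2 - b < b * ε})
    (hKmeas : MeasurableSet Kε) (hKpos : 0 < volume Kε) (hKfin : volume Kε < ⊤)
    (f : (Fin n → ℝ) → ℝ) (hf : Measurable f) (hf0 : ∀ x, 0 ≤ f x) :
    Real.exp (-(2 * b * r + 4 * |s|) * ε * n) *
        ((∫ x in Kε, f x) / (volume Kε).toReal) ≤
      (∫ x in Kε, f x * Real.exp (-r * ∑ i, (x i) ^ 2 - s * ∑ i, x i)) /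
        (∫ x in Kε, Real.exp (-r * ∑ i, (x i) ^ 2 - s * ∑ i, x i)) ∧
    (∫ x in Kε, f x * Real.exp (-r * ∑ i, (x i) ^ 2 - s * ∑ i, x i)) /
        (∫ x in Kε, Real.exp (-r * ∑ i, (x i) ^ 2 - s * ∑ i, x i)) ≤
      Real.exp ((2 * b * r + 4 * |s|) * ε * n) *
        ((∫ x in Kε, f x) / (volume Kε).toReal) := by
  have hr : 0 ≤ r := by rcases hrs with h | ⟨h, -⟩; exacts [h.le, h.ge]
  have hn0 : (0:ℝ) < (n:ℝ) := by exact_mod_cast Nat.lt_of_lt_of_le Nat.zero_lt_one hn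
  set g : (Fin n → ℝ) → ℝ := fun x => Real.exp (-r * ∑ i, (x i) ^ 2 - s * ∑ i, x i)
    with hgdef
  obtain ⟨c₁, hc₁⟩ : ∃ c : ℝ, c = -r * ((n:ℝ)*(b+b*ε)) - s * ((n:ℝ)*(1+ε)) - |s| * ((n:ℝ)*ε) :=
    ⟨_, rfl⟩
  obtain ⟨c₂, hc₂⟩ : ∃ c : ℝ, c = -r * ((n:ℝ)*(b+ε)) - s * ((n:ℝ)*(1+ε)) + |s| * ((n:ℝ)*ε) :=
    ⟨_, rfl⟩
  have habs0 : (0:ℝ) ≤ |s| := abs_nonneg s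
  have habs1 : -|s| ≤ s := neg_abs_le s
  have habs2 : s ≤ |s| := le_abs_self s
  -- pointwise bounds on the density over Kε
  have hbound : ∀ x ∈ Kε, Real.exp c₁ ≤ g x ∧ g x ≤ Real.exp c₂ := by
    intro x hx
    rw [hK] at hx
    obtain ⟨hpos, h1, h2, h3, h4⟩ := hx
    have eS : ∑ i, x i = (n:ℝ) * ((1/(n:ℝ)) * ∑ i, x i) := by field_simp
    have eQ : ∑ i, (x i)^2 = (n:ℝ) * ((1/(n:ℝ)) * ∑ i, (x i)^2) := by field_simp
    have hS1 : (n:ℝ)*(1+ε) < ∑ i, x i := by rw [eS]; nlinarith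
    have hS2 : ∑ i, x i < (n:ℝ)*(1+2*ε) := by rw [eS]; nlinarith
    have hQ1 : (n:ℝ)*(b+ε) < ∑ i, (x i)^2 := by rw [eQ]; nlinarith
    have hQ2 : ∑ i, (x i)^2 < (n:ℝ)*(b+b*ε) := by rw [eQ]; nlinarith
    obtain ⟨hlow, hhigh⟩ := exp_bounds_aux hr hS1 hS2 hQ1 hQ2
    constructor
    · simp only [hgdef]
      rw [Real.exp_le_exp, hc₁]
      exact hlow
    · simp only [hgdef]
      rw [Real.exp_le_exp, hc₂]
      exact hhigh
  -- the gap between the two exponents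
  have hc : c₂ ≤ c₁ + (2 * b * r + 4 * |s|) * ε * n := by
    rw [hc₁, hc₂]
    nlinarith [mul_nonneg (mul_nonneg hr hn0.le) hε.le,
      mul_nonneg (mul_nonneg habs0 hn0.le) hε.le,
      mul_nonneg (mul_nonneg (mul_nonneg hr hn0.le) hε.le) (by linarith : (0:ℝ) ≤ b - 1)]
  have hgm : Measurable g := by
    apply Real.measurable_exp.comp
    exact ((Finset.measurable_sum _ fun i _ => (measurable_pi_apply i).pow_const 2).const_mul
      (-r)).sub ((Finset.measurable_sum _ fun i _ => measurable_pi_apply i).const_mul s)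
  have hIntc2 : IntegrableOn (fun _ : Fin n → ℝ => Real.exp c₂) Kε :=
    integrableOn_const hKfin.ne
  have hIntc1 : IntegrableOn (fun _ : Fin n → ℝ => Real.exp c₁) Kε :=
    integrableOn_const hKfin.ne
  have hIntg : IntegrableOn g Kε := by
    refine Integrable.mono' hIntc2 hgm.aestronglyMeasurable ?_
    refine (ae_restrict_iff' hKmeas).2 (Filter.Eventually.of_forall fun x hx => ?_)
    rw [Real.norm_eq_abs, abs_of_pos (Real.exp_pos _)]
    exact (hbound x hx).2
  set V : ℝ := (volume Kε).toReal with hVdef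
  have hV : 0 < V := ENNReal.toReal_pos hKpos.ne' hKfin.ne
  have hIg_lb : Real.exp c₁ * V ≤ ∫ x in Kε, g x := by
    have h := setIntegral_mono_on hIntc1 hIntg hKmeas (fun x hx => (hbound x hx).1)
    rwa [setIntegral_const, smul_eq_mul, mul_comm] at h
  have hIg_ub : (∫ x in Kε, g x) ≤ Real.exp c₂ * V := by
    have h := setIntegral_mono_on hIntg hIntc2 hKmeas (fun x hx => (hbound x hx).2)
    rwa [setIntegral_const, smul_eq_mul, mul_comm] at h
  have hIg_pos : 0 < ∫ x in Kε, g x :=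
    lt_of_lt_of_le (by positivity) hIg_lb
  by_cases hfi : IntegrableOn f Kε
  · -- integrable case
    have hfgi : IntegrableOn (fun x => f x * g x) Kε := by
      refine Integrable.mono' (hfi.const_mul (Real.exp c₂)) (hf.mul hgm).aestronglyMeasurable ?_
      refine (ae_restrict_iff' hKmeas).2 (Filter.Eventually.of_forall fun x hx => ?_)
      rw [Real.norm_eq_abs, abs_of_nonneg (mul_nonneg (hf0 x) (Real.exp_pos _).le)]
      calc f x * g x ≤ f x * Real.exp c₂ :=
            mul_le_mul_of_nonneg_left (hbound x hx).2 (hf0 x)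
        _ = Real.exp c₂ * f x := mul_comm _ _
    have hIf_nonneg : 0 ≤ ∫ x in Kε, f x :=
      setIntegral_nonneg hKmeas fun x _ => hf0 x
    have hIfg_lb : Real.exp c₁ * ∫ x in Kε, f x ≤ ∫ x in Kε, f x * g x := by
      have h := setIntegral_mono_on (hfi.const_mul (Real.exp c₁)) hfgi hKmeas
        (fun x hx => by
          calc Real.exp c₁ * f x = f x * Real.exp c₁ := mul_comm _ _
            _ ≤ f x * g x := mul_le_mul_of_nonneg_left (hbound x hx).1 (hf0 x))
      rwa [integral_const_mul] at h
    have hIfg_ub : (∫ x in Kε, f x * g x) ≤ Real.exp c₂ * ∫ x in Kε, f x := by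
      have h := setIntegral_mono_on hfgi (hfi.const_mul (Real.exp c₂)) hKmeas
        (fun x hx => by
          calc f x * g x ≤ f x * Real.exp c₂ :=
                mul_le_mul_of_nonneg_left (hbound x hx).2 (hf0 x)
            _ = Real.exp c₂ * f x := mul_comm _ _)
      rwa [integral_const_mul] at h
    set If : ℝ := ∫ x in Kε, f x with hIfdef
    set Ig : ℝ := ∫ x in Kε, g x with hIgdef
    set Ifg : ℝ := ∫ x in Kε, f x * g x with hIfgdef
    have key1 : Real.exp (-(2 * b * r + 4 * |s|) * ε * n) * Real.exp c₂ ≤ Real.exp c₁ := by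
      rw [← Real.exp_add, Real.exp_le_exp]; linarith
    have key2 : Real.exp c₂ ≤ Real.exp ((2 * b * r + 4 * |s|) * ε * n) * Real.exp c₁ := by
      rw [← Real.exp_add, Real.exp_le_exp]; linarith
    constructor
    · rw [← mul_div_assoc, div_le_div_iff₀ hV hIg_pos]
      calc Real.exp (-(2 * b * r + 4 * |s|) * ε * n) * If * Ig
          ≤ Real.exp (-(2 * b * r + 4 * |s|) * ε * n) * If * (Real.exp c₂ * V) :=
            mul_le_mul_of_nonneg_left hIg_ub
              (mul_nonneg (Real.exp_pos _).le hIf_nonneg)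
        _ = (Real.exp (-(2 * b * r + 4 * |s|) * ε * n) * Real.exp c₂) * (If * V) := by ring
        _ ≤ Real.exp c₁ * (If * V) :=
            mul_le_mul_of_nonneg_right key1 (mul_nonneg hIf_nonneg hV.le)
        _ = (Real.exp c₁ * If) * V := by ring
        _ ≤ Ifg * V := mul_le_mul_of_nonneg_right hIfg_lb hV.le
    · rw [← mul_div_assoc, div_le_div_iff₀ hIg_pos hV]
      calc Ifg * V ≤ (Real.exp c₂ * If) * V :=
            mul_le_mul_of_nonneg_right hIfg_ub hV.le
        _ ≤ ((Real.exp ((2 * b * r + 4 * |s|) * ε * n) * Real.exp c₁) * If) * V :=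
            mul_le_mul_of_nonneg_right
              (mul_le_mul_of_nonneg_right key2 hIf_nonneg) hV.le
        _ = Real.exp ((2 * b * r + 4 * |s|) * ε * n) * If * (Real.exp c₁ * V) := by ring
        _ ≤ Real.exp ((2 * b * r + 4 * |s|) * ε * n) * If * Ig :=
            mul_le_mul_of_nonneg_left hIg_lb
              (mul_nonneg (Real.exp_pos _).le hIf_nonneg)
  · -- non-integrable case: both integrals vanish
    have hfgi : ¬ IntegrableOn (fun x => f x * g x) Kε := by
      intro h
      apply hfi
      refine Integrable.mono' (h.const_mul (Real.exp (-c₁))) hf.aestronglyMeasurable ?_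
      refine (ae_restrict_iff' hKmeas).2 (Filter.Eventually.of_forall fun x hx => ?_)
      rw [Real.norm_eq_abs, abs_of_nonneg (hf0 x)]
      have h1 : f x * Real.exp c₁ ≤ f x * g x :=
        mul_le_mul_of_nonneg_left (hbound x hx).1 (hf0 x)
      have hinv : Real.exp (-c₁) * Real.exp c₁ = 1 := by
        rw [Real.exp_neg, inv_mul_cancel₀ (Real.exp_ne_zero _)]
      calc f x = (Real.exp (-c₁) * Real.exp c₁) * f x := by rw [hinv, one_mul]
        _ = Real.exp (-c₁) * (f x * Real.exp c₁) := by ring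
        _ ≤ Real.exp (-c₁) * (f x * g x) :=
            mul_le_mul_of_nonneg_left h1 (Real.exp_pos _).le
    rw [integral_undef hfi, integral_undef hfgi]
    constructor <;> simp
end
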